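/- Let N = {1, …, k} and let f : 2^N → ℝ be submodular, normalized, and increasing; take outcome set 𝒴 = 2^N, Lovász hinge L^f : ℝ^k → ℝ^{2^N}, and discrete loss ℓ^f : 2^N → ℝ^{2^N} with ℓ^f(A)_S = f(A △ S). Then the following are equivalent: (a) f is modular; (b) for every sign-consistent link ψ : ℝ^k → 2^N, the pair (L^f, ψ) is calibrated with respect to ℓ^f. -/

import Mathlib

open scoped BigOperators

/-- The probability simplex over a finite outcome set `Y`. -/
def probSimplex (Y : Type*) [Fintype Y] : Set (Y → ℝ) :=
  {p | (∀ y, 0 ≤ p y) ∧ ∑ y, p y = 1}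

/-- Expected loss `⟨p, v⟩ = ∑ y, p y * v y`. -/
def elloss {Y : Type*} [Fintype Y] (p : Y → ℝ) (v : Y → ℝ) : ℝ :=
  ∑ y, p y * v y

/-- `u` minimizes the expected loss `⟨p, L ·⟩` over the report set. -/
def Minimizes {U Y : Type*} [Fintype Y] (p : Y → ℝ) (L : U → Y → ℝ) (u : U) : Prop :=
  ∀ u' : U, elloss p (L u) ≤ elloss p (L u')

/-- The Bayes risk `inf_u ⟨p, L u⟩`. -/
noncomputable def bayesRisk {U Y : Type*} [Fintype Y] (p : Y → ℝ) (L : U → Y → ℝ) : ℝ :=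
  sInf (Set.range fun u => elloss p (L u))

/-- `(L, ψ)` is calibrated with respect to `ℓ`: for each `p` in the simplex, the infimum of
expected surrogate loss over reports linking outside `argmin ⟨p, ℓ ·⟩` is strictly greater
than the overall infimum (equivalently, exceeds it by some `ε > 0`; the condition is vacuous,
i.e. `inf ∅ = +∞`, when no report links to an incorrect prediction). -/
def Calibrated {R Y : Type*} [Fintype Y] {k : ℕ}
    (L : (Fin k → ℝ) → Y → ℝ) (ℓ : R → Y → ℝ) (ψ : (Fin k → ℝ) → R) : Prop :=
  ∀ p ∈ probSimplex Y, ∃ ε > 0, ∀ u : Fin k → ℝ,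
    ¬ Minimizes p ℓ (ψ u) → bayesRisk p L + ε ≤ elloss p (L u)

/-- A set function on `N = {1, …, k}` is submodular if
`f (S ∪ T) + f (S ∩ T) ≤ f S + f T` for all `S, T`. -/
def Submodular {k : ℕ} (f : Finset (Fin k) → ℝ) : Prop :=
  ∀ S T : Finset (Fin k), f (S ∪ T) + f (S ∩ T) ≤ f S + f T

/-- A set function is modular if `f (S ∪ T) + f (S ∩ T) = f S + f T` for all `S, T`. -/
def Modular {k : ℕ} (f : Finset (Fin k) → ℝ) : Prop :=
  ∀ S T : Finset (Fin k), f (S ∪ T) + f (S ∩ T) = f S + f T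

open Classical in
/-- The Lovász extension of a normalized set function `f`:
`F(u) = ∫₀^∞ f({i : uᵢ ≥ θ}) dθ + ∫_{−∞}^0 (f({i : uᵢ ≥ θ}) − f(N)) dθ`. -/
noncomputable def lovaszExtension {k : ℕ} (f : Finset (Fin k) → ℝ) (u : Fin k → ℝ) : ℝ :=
  (∫ θ in Set.Ioi (0 : ℝ), f (Finset.univ.filter fun i => θ ≤ u i)) +
  (∫ θ in Set.Iio (0 : ℝ), (f (Finset.univ.filter fun i => θ ≤ u i) - f Finset.univ))

/-- The `±1` indicator of `S ⊆ N` at coordinate `i`. -/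
def chi {k : ℕ} (S : Finset (Fin k)) (i : Fin k) : ℝ := if i ∈ S then 1 else -1

/-- The Lovász hinge of an increasing normalized set function `f`:
`L^f(u)_S = F((1 − u ⊙ χ_S)₊)`. -/
noncomputable def lovaszHinge {k : ℕ} (f : Finset (Fin k) → ℝ) (u : Fin k → ℝ) :
    Finset (Fin k) → ℝ :=
  fun S => lovaszExtension f (fun i => max (1 - u i * chi S i) 0)

/-- A link `ψ : ℝ^k → 2^N` is sign-consistent if `uᵢ > 0 → i ∈ ψ(u)` and
`uᵢ < 0 → i ∉ ψ(u)`. -/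
def SignConsistent {k : ℕ} (ψ : (Fin k → ℝ) → Finset (Fin k)) : Prop :=
  ∀ (u : Fin k → ℝ) (i : Fin k), (0 < u i → i ∈ ψ u) ∧ (u i < 0 → i ∉ ψ u)



/-!
If `f` is modular then `f A = ∑ m ∈ A, aₘ` with `aₘ = f {m} ≥ 0`, and both the Lovász hinge and
the discrete loss split into coordinates: coordinate `m` contributes `aₘ` times the binary hinge,
resp. the 0-1 loss, for the event `m ∈ Y`. For the binary hinge, the excess 0-1 risk of the sign
of a score is at most its excess hinge risk; summing, the same regret transfer holds for `L^f`,
and since there are finitely many reports, a suboptimal one has excess discrete risk bounded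
away from `0`.

If `f` is not modular, submodularity gives `i ∉ T` with `f (insert i T) < f T + f {i}`. Let
`S = insert i T` and put mass `1/2` on each of `S` and `∅`. The Lovász extension dominates the
linear function given by Edmonds' greedy vector for `S`, which is tight at the indicator of `S`,
so the hinge risk is at least `f S`. It equals `f S` at the report that is `0` on `S` and `-1`
off `S`, and a sign-consistent link may break the ties at `0` to output `T`, whose discrete risk
`(f {i} + f T) / 2` exceeds that of `∅`.
-/
open MeasureTheory Finset

section LovaszExtension

open Set

variable {k : ℕ}

noncomputable def superlevel (v : Fin k → ℝ) (θ : ℝ) : Finset (Fin k) :=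
  univ.filter fun i => θ ≤ v i

lemma mem_superlevel {v : Fin k → ℝ} {θ : ℝ} {i : Fin k} : i ∈ superlevel v θ ↔ θ ≤ v i := by
  simp [superlevel]

lemma measurable_superlevel (v : Fin k → ℝ) : Measurable (superlevel v) :=
  measurable_finset_iff.2 fun i => by
    simp only [mem_superlevel]
    exact measurableSet_Iic.mem

lemma integrableOn_Ioi_superlevel {f : Finset (Fin k) → ℝ} (hf : f ∅ = 0) (v : Fin k → ℝ) :
    IntegrableOn (fun θ => f (superlevel v θ)) (Ioi 0) := by
  obtain ⟨M, hM⟩ := (finite_range v).bddAbove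
  obtain ⟨C, hC⟩ := (finite_range fun A => ‖f A‖).bddAbove
  have hvanish : ∀ θ ∈ Ioi (max M 0), f (superlevel v θ) = 0 := by
    intro θ hθ
    convert hf using 2
    ext i
    simpa [mem_superlevel] using (hM (mem_range_self i)).trans_lt ((le_max_left _ _).trans_lt hθ)
  rw [← Ioc_union_Ioi_eq_Ioi (le_max_right M 0)]
  refine IntegrableOn.union ?_ (integrableOn_zero.congr_fun (fun θ hθ => (hvanish θ hθ).symm)
    measurableSet_Ioi)
  exact Measure.integrableOn_of_bounded (M := C) measure_Ioc_lt_top.ne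
    ((measurable_of_countable f).comp (measurable_superlevel v)).aestronglyMeasurable
    (ae_of_all _ fun θ => hC (mem_range_self _))

lemma lovaszExtension_eq_setIntegral_Ioi (f : Finset (Fin k) → ℝ) {v : Fin k → ℝ}
    (hv : 0 ≤ v) : lovaszExtension f v = ∫ θ in Ioi 0, f (superlevel v θ) := by
  have hneg : ∀ θ ∈ Iio (0 : ℝ), f (superlevel v θ) - f univ = 0 := fun θ hθ => by
    rw [sub_eq_zero, superlevel, filter_true_of_mem fun i _ => (le_of_lt hθ).trans (hv i)]
  change (∫ θ in Ioi 0, f (superlevel v θ)) + ∫ θ in Iio 0, (f (superlevel v θ) - f univ) = _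
  rw [setIntegral_congr_fun measurableSet_Iio hneg, integral_zero, add_zero]

lemma setIntegral_Ioi_ite_le (a : ℝ) {c : ℝ} (hc : 0 ≤ c) :
    ∫ θ in Ioi 0, (if θ ≤ c then a else 0) = a * c := by
  have : (fun θ : ℝ => if θ ≤ c then a else 0) = (Iic c).indicator fun _ => a := by
    ext θ; simp [indicator_apply]
  rw [this, integral_indicator_const _ measurableSet_Iic,
    measureReal_restrict_apply measurableSet_Iic, Iic_inter_Ioi, Real.volume_real_Ioc_of_le hc,
    sub_zero, smul_eq_mul, mul_comm]

lemma lovaszExtension_sum (a : Fin k → ℝ) {v : Fin k → ℝ} (hv : 0 ≤ v) :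
    lovaszExtension (fun A => ∑ m ∈ A, a m) v = ∑ m, a m * v m := by
  have hsplit : ∀ θ, ∑ m ∈ superlevel v θ, a m =
      ∑ m, if m ∈ superlevel v θ then a m else 0 := fun θ => by
    simp [sum_ite_mem]
  rw [lovaszExtension_eq_setIntegral_Ioi _ hv, integral_congr_ae (ae_of_all _ hsplit),
    integral_finsetSum _ fun m _ =>
      integrableOn_Ioi_superlevel (f := fun A => if m ∈ A then a m else 0) (by simp) v]
  refine sum_congr rfl fun m _ => ?_
  simpa only [mem_superlevel] using setIntegral_Ioi_ite_le (a m) (hv m)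

lemma sum_mul_le_lovaszExtension {f : Finset (Fin k) → ℝ} (hf : f ∅ = 0) {a : Fin k → ℝ}
    (ha : ∀ A, ∑ m ∈ A, a m ≤ f A) {v : Fin k → ℝ} (hv : 0 ≤ v) :
    ∑ m, a m * v m ≤ lovaszExtension f v := by
  rw [← lovaszExtension_sum a hv, lovaszExtension_eq_setIntegral_Ioi _ hv,
    lovaszExtension_eq_setIntegral_Ioi _ hv]
  exact setIntegral_mono_on (integrableOn_Ioi_superlevel (f := fun A => ∑ m ∈ A, a m) sum_empty v)
    (integrableOn_Ioi_superlevel hf v) measurableSet_Ioi fun θ _ => ha _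

lemma lovaszExtension_indicator {f : Finset (Fin k) → ℝ} (hf : f ∅ = 0) (S : Finset (Fin k)) :
    lovaszExtension f (fun m => if m ∈ S then 1 else 0) = f S := by
  have hv : (0 : Fin k → ℝ) ≤ fun m => if m ∈ S then 1 else 0 := fun m => by
    dsimp only; split_ifs <;> norm_num
  have hlevel : ∀ θ ∈ Ioi (0 : ℝ), f (superlevel (fun m => if m ∈ S then 1 else 0) θ) =
      if θ ≤ 1 then f S else 0 := by
    intro θ (hθ : 0 < θ)
    split_ifs with h
    · congr 1; ext m; by_cases hm : m ∈ S <;> simp [mem_superlevel, hm, h, hθ]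
    · convert hf using 2; ext m
      by_cases hm : m ∈ S <;> simp [mem_superlevel, hm, not_le.1 h, hθ]
  rw [lovaszExtension_eq_setIntegral_Ioi _ hv, setIntegral_congr_fun measurableSet_Ioi hlevel,
    setIntegral_Ioi_ite_le _ zero_le_one, mul_one]

end LovaszExtension

section SetFunction

variable {k : ℕ} {f : Finset (Fin k) → ℝ}

lemma modular_of_eq_sum (a : Fin k → ℝ) (hf : ∀ A, f A = ∑ m ∈ A, a m) : Modular f := by
  intro S T
  simp only [hf]
  exact sum_union_inter

lemma eq_sum_singleton_of_insert (hnorm : f ∅ = 0)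
    (hins : ∀ T i, i ∉ T → f (insert i T) = f T + f {i}) (A : Finset (Fin k)) :
    f A = ∑ m ∈ A, f {m} := by
  induction A using Finset.induction_on with
  | empty => simpa using hnorm
  | insert i T hi ih => rw [hins T i hi, sum_insert hi, ih, add_comm]

lemma Modular.eq_sum_singleton (hmod : Modular f) (hnorm : f ∅ = 0) (A : Finset (Fin k)) :
    f A = ∑ m ∈ A, f {m} := by
  refine eq_sum_singleton_of_insert hnorm (fun T i hi => ?_) A
  have h := hmod T {i}
  rwa [Finset.union_singleton, inter_singleton_of_notMem hi, hnorm, add_zero] at h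

lemma exists_insert_lt_of_not_modular (hsub : Submodular f) (hnorm : f ∅ = 0)
    (hmod : ¬ Modular f) : ∃ T i, i ∉ T ∧ f (insert i T) < f T + f {i} := by
  by_contra! hge
  refine hmod (modular_of_eq_sum _ (eq_sum_singleton_of_insert hnorm fun T i hi => ?_))
  have h := hsub T {i}
  rw [Finset.union_singleton, inter_singleton_of_notMem hi, hnorm, add_zero] at h
  exact le_antisymm h (hge T i hi)

/-- Edmonds' greedy vector: the marginal gains of adding the elements of `S` one at a time. -/
lemma exists_nonneg_sum_le_sum_eq (hsub : Submodular f) (hnorm : f ∅ = 0)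
    (hmono : ∀ S T : Finset (Fin k), S ⊆ T → f S ≤ f T) (S : Finset (Fin k)) :
    ∃ a : Fin k → ℝ, 0 ≤ a ∧ (∀ A, ∑ m ∈ A, a m ≤ f (A ∩ S)) ∧ ∑ m ∈ S, a m = f S := by
  induction S using Finset.induction_on with
  | empty => exact ⟨0, le_rfl, fun A => by simp [hnorm], by simp [hnorm]⟩
  | insert i T hi ih =>
    obtain ⟨a, ha0, hle, heq⟩ := ih
    set a' := Function.update a i (f (insert i T) - f T)
    have hai : a' i = f (insert i T) - f T := Function.update_self ..
    have hsum_erase : ∀ A : Finset (Fin k), ∑ m ∈ A.erase i, a' m = ∑ m ∈ A.erase i, a m := fun A =>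
      sum_congr rfl fun m hm => Function.update_of_ne (ne_of_mem_erase hm) _ _
    refine ⟨a', fun m => ?_, fun A => ?_, ?_⟩
    · rcases eq_or_ne m i with rfl | hm
      · simpa [hai] using hmono _ _ (subset_insert m T)
      · simpa [a', hm] using ha0 m
    · by_cases hiA : i ∈ A
      · have hgain := hsub (insert i (A ∩ T)) T
        rw [Finset.insert_union, union_eq_right.2 inter_subset_right,
          insert_inter_of_notMem hi, inter_assoc, inter_self] at hgain
        calc ∑ m ∈ A, a' m = f (insert i T) - f T + ∑ m ∈ A.erase i, a m := by
              rw [← add_sum_erase A a' hiA, hsum_erase, hai]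
          _ ≤ f (insert i T) - f T + f (A ∩ T) := by
              grw [hle, erase_inter, erase_eq_of_notMem (notMem_mono inter_subset_right hi)]
          _ ≤ f (A ∩ insert i T) := by rw [inter_insert_of_mem hiA]; linarith
      · rw [← erase_eq_of_notMem hiA, hsum_erase, erase_eq_of_notMem hiA]
        exact (hle A).trans (hmono _ _ (inter_subset_inter_left (subset_insert i T)))
    · rw [sum_insert hi, hai, ← erase_eq_of_notMem hi, hsum_erase,
        erase_eq_of_notMem hi, heq, sub_add_cancel]

end SetFunction

section Calibration

variable {R U Y : Type*} [Fintype Y]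

lemma exists_pos_add_le_of_lt [Finite R] (g : R → ℝ) (c : ℝ) :
    ∃ ε > 0, ∀ r, c < g r → c + ε ≤ g r := by
  have := Fintype.ofFinite R
  by_cases hne : ∃ r, c < g r
  · obtain ⟨r, hr⟩ := hne
    obtain ⟨r₁, hr₁, hmin⟩ :=
      (univ.filter fun r => c < g r).exists_min_image g ⟨r, by simpa using hr⟩
    rw [mem_filter] at hr₁
    exact ⟨g r₁ - c, sub_pos.2 hr₁.2, fun r hr => by
      linarith [hmin r (mem_filter.2 ⟨mem_univ r, hr⟩)]⟩
  · exact ⟨1, one_pos, fun r hr => (hne ⟨r, hr⟩).elim⟩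

lemma bayesRisk_eq_of_minimizes {p : Y → ℝ} {L : U → Y → ℝ} {u₀ : U} (h : Minimizes p L u₀) :
    bayesRisk p L = elloss p (L u₀) :=
  IsLeast.csInf_eq ⟨⟨u₀, rfl⟩, by rintro _ ⟨u, rfl⟩; exact h u⟩

theorem calibrated_of_regret_le [Finite R] {k : ℕ} {L : (Fin k → ℝ) → Y → ℝ} {ℓ : R → Y → ℝ}
    {ψ : (Fin k → ℝ) → R}
    (h : ∀ p ∈ probSimplex Y, ∃ r₀ u₀, Minimizes p ℓ r₀ ∧ ∀ u,
      elloss p (ℓ (ψ u)) - elloss p (ℓ r₀) ≤ elloss p (L u) - elloss p (L u₀)) :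
    Calibrated L ℓ ψ := by
  intro p hp
  obtain ⟨r₀, u₀, hr₀, hregret⟩ := h p hp
  have hu₀ : Minimizes p L u₀ := fun u => by
    linarith [hregret u, hr₀ (ψ u)]
  obtain ⟨ε, hε, hgap⟩ := exists_pos_add_le_of_lt (fun r => elloss p (ℓ r)) (elloss p (ℓ r₀))
  refine ⟨ε, hε, fun u hu => ?_⟩
  have hlt : elloss p (ℓ r₀) < elloss p (ℓ (ψ u)) := by
    by_contra! hle
    exact hu fun r => hle.trans (hr₀ r)
  linarith [hgap _ hlt, hregret u, bayesRisk_eq_of_minimizes hu₀]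

end Calibration

section BinaryHinge

/-- Expected hinge loss of the score `t` for a label that is `+1` with probability `q`. -/
noncomputable def hingeRisk (q t : ℝ) : ℝ := q * max (1 - t) 0 + (1 - q) * max (1 + t) 0

lemma sub_le_hingeRisk_sub {q t : ℝ} (hq0 : 0 ≤ q) (hq1 : q ≤ 1) {b : Prop} [Decidable b]
    (hpos : 0 < t → b) (hneg : t < 0 → ¬b) :
    (if b then 1 - q else q) - (if 1 / 2 < q then 1 - q else q) ≤
      hingeRisk q t - hingeRisk q (if 1 / 2 < q then 1 else -1) := by
  have h1 : 1 - t ≤ max (1 - t) 0 := le_max_left _ _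
  have h2 : 1 + t ≤ max (1 + t) 0 := le_max_left _ _
  have h3 : 0 ≤ max (1 - t) 0 := le_max_right _ _
  have h4 : 0 ≤ max (1 + t) 0 := le_max_right _ _
  unfold hingeRisk
  have hq1' : 0 ≤ 1 - q := sub_nonneg.2 hq1
  by_cases hb : b <;> by_cases hq : 1 / 2 < q <;> simp only [hb, hq, if_true, if_false] <;> norm_num
  · nlinarith [mul_nonneg hq1' (by linarith : 0 ≤ max (1 - t) 0 + max (1 + t) 0 - 2),
      mul_nonneg (by linarith : 0 ≤ 2 * q - 1) h3]
  · have ht : 0 ≤ t := not_lt.1 fun h => hneg h hb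
    nlinarith [mul_le_mul_of_nonneg_left h1 hq0, mul_le_mul_of_nonneg_left h2 hq1',
      mul_nonneg ht (by linarith : 0 ≤ 1 - 2 * q)]
  · have ht : t ≤ 0 := not_lt.1 fun h => hb (hpos h)
    nlinarith [mul_le_mul_of_nonneg_left h1 hq0, mul_le_mul_of_nonneg_left h2 hq1',
      mul_nonneg (neg_nonneg.2 ht) (by linarith : 0 ≤ 2 * q - 1)]
  · nlinarith [mul_nonneg hq0 (by linarith : 0 ≤ max (1 - t) 0 + max (1 + t) 0 - 2),
      mul_nonneg (by linarith : 0 ≤ 1 - 2 * q) h4]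

end BinaryHinge

section Marginal

variable {α : Type*} [Fintype α] [DecidableEq α]

noncomputable def marginal (p : Finset α → ℝ) (m : α) : ℝ := ∑ Y with m ∈ Y, p Y

lemma marginal_nonneg {p : Finset α → ℝ} (hp : p ∈ probSimplex (Finset α)) (m : α) :
    0 ≤ marginal p m :=
  sum_nonneg fun Y _ => hp.1 Y

lemma marginal_le_one {p : Finset α → ℝ} (hp : p ∈ probSimplex (Finset α)) (m : α) :
    marginal p m ≤ 1 :=
  hp.2 ▸ sum_le_sum_of_subset_of_nonneg (filter_subset _ _) fun Y _ _ => hp.1 Y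

lemma elloss_sum_ite_mem {p : Finset α → ℝ} (hp : p ∈ probSimplex (Finset α)) (a x y : α → ℝ) :
    elloss p (fun Y => ∑ m, a m * if m ∈ Y then x m else y m) =
      ∑ m, a m * (marginal p m * x m + (1 - marginal p m) * y m) := by
  have hcompl : ∀ m, ∑ Y with m ∉ Y, p Y = 1 - marginal p m := fun m => by
    rw [← hp.2, ← sum_filter_add_sum_filter_not univ (m ∈ ·), marginal, add_sub_cancel_left]
  simp only [elloss, mul_sum]
  rw [sum_comm]
  refine sum_congr rfl fun m _ => ?_
  simp only [mul_left_comm (p _), ← mul_sum, mul_ite, sum_ite, marginal, ← sum_mul, hcompl]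
  ring

end Marginal

section ModularLoss

variable {k : ℕ} {f : Finset (Fin k) → ℝ} {a : Fin k → ℝ}

lemma lovaszHinge_of_eq_sum (hf : ∀ A, f A = ∑ m ∈ A, a m) (u : Fin k → ℝ)
    (Y : Finset (Fin k)) :
    lovaszHinge f u Y = ∑ m, a m * if m ∈ Y then max (1 - u m) 0 else max (1 + u m) 0 := by
  rw [lovaszHinge, funext hf, lovaszExtension_sum a fun m => le_max_right (1 - u m * chi Y m) 0]
  refine sum_congr rfl fun m _ => ?_
  by_cases hm : m ∈ Y <;> simp [chi, hm, sub_eq_add_neg]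

lemma elloss_lovaszHinge_of_eq_sum (hf : ∀ A, f A = ∑ m ∈ A, a m) {p : Finset (Fin k) → ℝ}
    (hp : p ∈ probSimplex (Finset (Fin k))) (u : Fin k → ℝ) :
    elloss p (lovaszHinge f u) = ∑ m, a m * hingeRisk (marginal p m) (u m) := by
  rw [funext (lovaszHinge_of_eq_sum hf u), elloss_sum_ite_mem hp]
  rfl

lemma elloss_symmDiff_of_eq_sum (hf : ∀ A, f A = ∑ m ∈ A, a m) {p : Finset (Fin k) → ℝ}
    (hp : p ∈ probSimplex (Finset (Fin k))) (A : Finset (Fin k)) :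
    elloss p (fun Y => f (symmDiff A Y)) =
      ∑ m, a m * if m ∈ A then 1 - marginal p m else marginal p m := by
  have hdiff : ∀ Y, f (symmDiff A Y) = ∑ m, a m *
      if m ∈ Y then (if m ∈ A then 0 else 1) else (if m ∈ A then 1 else 0) := fun Y => by
    rw [hf, ← univ_inter (symmDiff A Y), ← sum_ite_mem]
    refine sum_congr rfl fun m _ => ?_
    by_cases hA : m ∈ A <;> by_cases hY : m ∈ Y <;> simp [mem_symmDiff, hA, hY]
  rw [funext hdiff, elloss_sum_ite_mem hp]
  refine sum_congr rfl fun m _ => ?_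
  split_ifs <;> ring

theorem calibrated_of_modular (hnorm : f ∅ = 0)
    (hmono : ∀ S T : Finset (Fin k), S ⊆ T → f S ≤ f T) (hmod : Modular f)
    {ψ : (Fin k → ℝ) → Finset (Fin k)} (hψ : SignConsistent ψ) :
    Calibrated (lovaszHinge f) (fun A S => f (symmDiff A S)) ψ := by
  have ha : ∀ m, 0 ≤ f {m} := fun m => hnorm ▸ hmono _ _ (empty_subset _)
  have hf := hmod.eq_sum_singleton hnorm
  refine calibrated_of_regret_le fun p hp => ?_
  set q := marginal p
  refine ⟨univ.filter fun m => 1 / 2 < q m, fun m => if 1 / 2 < q m then 1 else -1,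
    fun A => ?_, fun u => ?_⟩
  · simp only [elloss_symmDiff_of_eq_sum hf hp, mem_filter, mem_univ, true_and]
    refine sum_le_sum fun m _ => mul_le_mul_of_nonneg_left ?_ (ha m)
    split_ifs <;> linarith
  · simp only [elloss_symmDiff_of_eq_sum hf hp, elloss_lovaszHinge_of_eq_sum hf hp, mem_filter,
      mem_univ, true_and, ← sum_sub_distrib, ← mul_sub]
    refine sum_le_sum fun m _ => mul_le_mul_of_nonneg_left ?_ (ha m)
    exact sub_le_hingeRisk_sub (marginal_nonneg hp m) (marginal_le_one hp m) (hψ u m).1 (hψ u m).2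

end ModularLoss

section TwoPoint

variable {Y : Type*} [DecidableEq Y]

noncomputable def pairDist (y₁ y₂ : Y) : Y → ℝ :=
  fun y => (if y = y₁ then 1 / 2 else 0) + (if y = y₂ then 1 / 2 else 0)

variable [Fintype Y]

lemma elloss_pairDist (y₁ y₂ : Y) (v : Y → ℝ) :
    elloss (pairDist y₁ y₂) v = (v y₁ + v y₂) / 2 := by
  simp only [elloss, pairDist, add_mul, ite_mul, zero_mul, sum_add_distrib, sum_ite_eq',
    mem_univ, if_true]
  ring

lemma pairDist_mem_probSimplex (y₁ y₂ : Y) : pairDist y₁ y₂ ∈ probSimplex Y := by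
  refine ⟨fun y => by unfold pairDist; positivity, ?_⟩
  simpa [elloss] using elloss_pairDist y₁ y₂ 1

end TwoPoint

section NonModular

variable {k : ℕ} {f : Finset (Fin k) → ℝ}

lemma le_elloss_pairDist_lovaszHinge (hsub : Submodular f) (hnorm : f ∅ = 0)
    (hmono : ∀ S T : Finset (Fin k), S ⊆ T → f S ≤ f T) (S : Finset (Fin k)) (u : Fin k → ℝ) :
    f S ≤ elloss (pairDist S ∅) (lovaszHinge f u) := by
  obtain ⟨a, ha0, hle, heq⟩ := exists_nonneg_sum_le_sum_eq hsub hnorm hmono S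
  have hpoly : ∀ A, ∑ m ∈ A, a m ≤ f A := fun A => (hle A).trans (hmono _ _ inter_subset_left)
  have hS := sum_mul_le_lovaszExtension hnorm hpoly fun m => le_max_right (1 - u m * chi S m) 0
  have h0 := sum_mul_le_lovaszExtension hnorm hpoly fun m => le_max_right (1 - u m * chi ∅ m) 0
  rw [elloss_pairDist, lovaszHinge, lovaszHinge]
  suffices 2 * f S ≤ ∑ m, a m * (max (1 - u m * chi S m) 0 + max (1 - u m * chi ∅ m) 0) by
    simp only [mul_add, sum_add_distrib] at this
    linarith
  calc 2 * f S = ∑ m, a m * if m ∈ S then 2 else 0 := by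
        rw [← heq, mul_sum]; simp [mul_ite, mul_comm]
    _ ≤ _ := sum_le_sum fun m _ => mul_le_mul_of_nonneg_left ?_ (ha0 m)
  by_cases hm : m ∈ S <;> simp only [hm, chi, notMem_empty, if_true, if_false]
  · linarith [le_max_left (1 - u m * 1) 0, le_max_left (1 - u m * -1) 0]
  · positivity

lemma lovaszHinge_of_subset (hnorm : f ∅ = 0) {S Y : Finset (Fin k)} (hY : Y ⊆ S) :
    lovaszHinge f (fun m => if m ∈ S then 0 else -1) Y = f S := by
  rw [lovaszHinge, ← lovaszExtension_indicator hnorm S]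
  congr 1
  ext m
  by_cases hmS : m ∈ S
  · simp [hmS]
  · simp [hmS, chi, notMem_mono hY hmS]

noncomputable def tieBreakLink (T : Finset (Fin k)) (u : Fin k → ℝ) : Finset (Fin k) :=
  univ.filter fun m => 0 < u m ∨ u m = 0 ∧ m ∈ T

lemma signConsistent_tieBreakLink (T : Finset (Fin k)) : SignConsistent (tieBreakLink T) :=
  fun u m => ⟨fun h => by simp [tieBreakLink, h], fun h => by simp [tieBreakLink, h.ne, h.not_gt]⟩

lemma tieBreakLink_of_subset {S T : Finset (Fin k)} (hT : T ⊆ S) :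
    tieBreakLink T (fun m => if m ∈ S then 0 else -1) = T := by
  ext m
  by_cases hmT : m ∈ T
  · simp [tieBreakLink, hT hmT, hmT]
  · by_cases hmS : m ∈ S <;> simp [tieBreakLink, hmT, hmS]

lemma not_minimizes_pairDist_insert_empty (hnorm : f ∅ = 0) {T : Finset (Fin k)} {i : Fin k}
    (hi : i ∉ T) (hlt : f (insert i T) < f T + f {i}) :
    ¬ Minimizes (pairDist (insert i T) ∅) (fun A S => f (symmDiff A S)) T := fun hmin => by
  have h := hmin ∅
  simp only [elloss_pairDist, symmDiff_of_le (subset_insert i T), insert_sdiff_cancel hi,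
    symmDiff_eq_union (disjoint_empty_left _), symmDiff_eq_union (disjoint_empty_right _),
    empty_union, union_empty, hnorm] at h
  linarith

theorem modular_of_forall_calibrated (hsub : Submodular f) (hnorm : f ∅ = 0)
    (hmono : ∀ S T : Finset (Fin k), S ⊆ T → f S ≤ f T)
    (hcal : ∀ ψ : (Fin k → ℝ) → Finset (Fin k), SignConsistent ψ →
      Calibrated (lovaszHinge f) (fun A S => f (symmDiff A S)) ψ) :
    Modular f := by
  by_contra hmod
  obtain ⟨T, i, hi, hlt⟩ := exists_insert_lt_of_not_modular hsub hnorm hmod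
  set S := insert i T
  set w : Fin k → ℝ := fun m => if m ∈ S then 0 else -1
  obtain ⟨ε, hε, hgap⟩ :=
    hcal _ (signConsistent_tieBreakLink T) (pairDist S ∅) (pairDist_mem_probSimplex S ∅)
  have hbayes : f S ≤ bayesRisk (pairDist S ∅) (lovaszHinge f) :=
    le_csInf (Set.range_nonempty _) <| by
      rintro _ ⟨u, rfl⟩
      exact le_elloss_pairDist_lovaszHinge hsub hnorm hmono S u
  have hw : elloss (pairDist S ∅) (lovaszHinge f w) = f S := by
    rw [elloss_pairDist, lovaszHinge_of_subset hnorm subset_rfl,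
      lovaszHinge_of_subset hnorm (empty_subset S), add_self_div_two]
  have hwrong := hgap w <| by
    rw [tieBreakLink_of_subset (subset_insert i T)]
    exact not_minimizes_pairDist_insert_empty hnorm hi hlt
  linarith

end NonModular

/-- For submodular, normalized, increasing `f`, the Lovász hinge `L^f` with
the discrete loss `ℓ^f(A)_S = f(A △ S)` is calibrated for every sign-consistent link iff `f`
is modular. -/
theorem lovaszHinge_calibrated_iff_modular
    {k : ℕ} (f : Finset (Fin k) → ℝ)
    (hsub : Submodular f) (hnorm : f ∅ = 0)
    (hmono : ∀ S T : Finset (Fin k), S ⊆ T → f S ≤ f T) :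
    Modular f ↔
      ∀ ψ : (Fin k → ℝ) → Finset (Fin k), SignConsistent ψ →
        Calibrated (lovaszHinge f) (fun A S => f (symmDiff A S)) ψ :=
  ⟨fun hmod _ hψ => calibrated_of_modular hnorm hmono hmod hψ,
    modular_of_forall_calibrated hsub hnorm hmono⟩
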